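/- For n ≥ 2, let M = ℂP^1 × ⋯ × ℂP^1 (n factors) carry the product Kähler metric ω where each factor is ℂP^1 with the round metric of constant sectional curvature 1/(n+1). Then Ric(ω) = (n+1)ω, but diam(M,ω) = √(n/(n+1)) · π > π/√2. In particular, a positive Ricci lower bound Ric ≥ (n+1)ω does not imply the diameter bound diam ≤ π/√2 for Kähler manifolds. -/

import Mathlib

noncomputable section
open Metric MeasureTheory Real Filter Set Topology

/-- The complex projective space `ℂPⁿ = ℙ(ℂ^{n+1})`. -/
abbrev CPn (n : ℕ) := Projectivization ℂ (EuclideanSpace ℂ (Fin (n + 1)))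

/-- The geodesic distance of the Fubini–Study metric `ω_{ℂPⁿ}`, normalised so that
`∫_{ℂPⁿ} ω_{ℂPⁿ}ⁿ = (2π)ⁿ` (equivalently `Ric = (n+1) ω_{ℂPⁿ}`).  With this
normalisation the geodesic distance satisfies
`cos²(d(x,y)/√2) = |⟨ξ,η⟩|²/(|ξ|²|η|²)` for any lifts `ξ, η`, hence
`d(x,y) = √2 · arccos(|⟨ξ,η⟩|/(|ξ||η|))` and `diam(ℂPⁿ) = π/√2`. -/
noncomputable def fsDist {n : ℕ} (x y : CPn n) : ℝ :=
  Real.sqrt 2 * Real.arccos (‖(inner ℂ x.rep y.rep : ℂ)‖ / (‖x.rep‖ * ‖y.rep‖))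

/-- The geodesic ball of radius `r` about `q` in `ℂPⁿ` for the Fubini–Study metric. -/
def fsBall {n : ℕ} (q : CPn n) (r : ℝ) : Set (CPn n) := {x | fsDist q x < r}

/-! Each factor has diameter `√(2/(n+1)) · π/√2 = π/√(n+1)`, attained at two orthogonal lines;
the `ℓ²`-product of `n` factors then has diameter `√n · π/√(n+1) = √(n/(n+1)) · π`, attained at
a pair of points that are antipodal in every factor. This exceeds `π/√2` exactly when `n > 1`. -/

lemma fsDist_nonneg {n : ℕ} (x y : CPn n) : 0 ≤ fsDist x y :=
  mul_nonneg (sqrt_nonneg 2) (arccos_nonneg _)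

lemma fsDist_le {n : ℕ} (x y : CPn n) : fsDist x y ≤ √2 * (π / 2) :=
  mul_le_mul_of_nonneg_left (arccos_le_pi_div_two.2 (by positivity)) (sqrt_nonneg 2)

open Projectivization in
lemma fsDist_mk_of_inner_eq_zero {n : ℕ} {v w : EuclideanSpace ℂ (Fin (n + 1))} (hv : v ≠ 0)
    (hw : w ≠ 0) (h : inner ℂ v w = 0) : fsDist (mk ℂ v hv) (mk ℂ w hw) = √2 * (π / 2) := by
  obtain ⟨a, ha⟩ := exists_smul_eq_mk_rep ℂ v hv
  obtain ⟨b, hb⟩ := exists_smul_eq_mk_rep ℂ w hw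
  rw [fsDist, ← ha, ← hb, Units.smul_def, Units.smul_def, inner_smul_left, inner_smul_right, h]
  simp

lemma exists_fsDist_eq (n : ℕ) : ∃ x y : CPn (n + 1), fsDist x y = √2 * (π / 2) :=
  ⟨_, _, fsDist_mk_of_inner_eq_zero (v := EuclideanSpace.single 0 1)
    (w := EuclideanSpace.single 1 1) (by simp) (by simp)
    (by simp [EuclideanSpace.inner_single_left])⟩

theorem isGreatest_sqrt_sum_sq {α ι : Type*} [Fintype ι] {f : α → α → ℝ} {D : ℝ}
    (hf_nonneg : ∀ x y, 0 ≤ f x y) (hf_le : ∀ x y, f x y ≤ D) (hf_eq : ∃ x y, f x y = D) :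
    IsGreatest {d : ℝ | ∃ x y : ι → α, d = √(∑ i, f (x i) (y i) ^ 2)}
      (√(Fintype.card ι) * D) := by
  obtain ⟨x₀, y₀, hD⟩ := hf_eq
  have h_const : √(∑ _i : ι, D ^ 2) = √(Fintype.card ι) * D := by
    rw [Finset.sum_const, Finset.card_univ, nsmul_eq_mul, sqrt_mul (Nat.cast_nonneg _),
      sqrt_sq (hD ▸ hf_nonneg x₀ y₀)]
  refine ⟨⟨fun _ ↦ x₀, fun _ ↦ y₀, by simp only [hD, h_const]⟩, ?_⟩
  rintro d ⟨x, y, rfl⟩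
  rw [← h_const]
  gcongr with i
  exacts [hf_nonneg _ _, hf_le _ _]

lemma pi_div_sqrt_two_lt_sqrt_div_mul_pi {x : ℝ} (hx : 1 < x) :
    π / √2 < √(x / (x + 1)) * π := by
  have h : (1 : ℝ) / 2 < x / (x + 1) := by
    rw [div_lt_div_iff₀ two_pos (by linarith)]
    linarith
  calc π / √2 = √(1 / 2) * π := by rw [sqrt_div' _ zero_le_two, sqrt_one]; ring
    _ < √(x / (x + 1)) * π := by gcongr

/-- For `n ≥ 2`, let `M = ℂP¹ × ⋯ × ℂP¹` (`n` factors) carry the product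
Kähler metric `ω` in which each factor is `ℂP¹` with the round metric normalised so that
the product satisfies `Ric(ω) = (n+1)ω` (each factor is the round 2-sphere of radius
`1/√(n+1)`, i.e. with `Ric = (n+1)·g`; in the paper's convention this is the "round
metric of curvature `1/(n+1)`").  Concretely, the geodesic distance on each factor is
`√(2/(n+1)) · fsDist` (the Fubini–Study distance on `ℂP¹`, which is the round sphere of
radius `1/√2`, rescaled to radius `1/√(n+1)`), and the distance of the Riemannian product
is the `ℓ²`-combination of the factor distances.  Then
`diam(M,ω) = √(n/(n+1))·π`, which is `> π/√2` since `n ≥ 2`: a positive Ricci lower bound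
`Ric ≥ (n+1)ω` does not imply the diameter bound `diam ≤ π/√2` for Kähler manifolds. -/
theorem diam_product_CP1_gt (n : ℕ) (hn : 2 ≤ n) :
    IsGreatest
      {d : ℝ | ∃ x y : Fin n → CPn 1,
        d = Real.sqrt (∑ i, (Real.sqrt (2 / (n + 1)) * fsDist (x i) (y i)) ^ 2)}
      (Real.sqrt (n / (n + 1)) * π) ∧
    π / Real.sqrt 2 < Real.sqrt (n / (n + 1)) * π := by
  have h_diam : √n * (√(2 / (n + 1)) * (√2 * (π / 2))) = √(n / (n + 1)) * π := by
    have hn₁ : (0 : ℝ) ≤ n + 1 := by positivity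
    rw [sqrt_div' _ hn₁, sqrt_div' _ hn₁]
    field_simp
    rw [sq_sqrt zero_le_two]
  refine ⟨?_, pi_div_sqrt_two_lt_sqrt_div_mul_pi (by exact_mod_cast hn)⟩
  have h := isGreatest_sqrt_sum_sq (ι := Fin n)
    (f := fun x y : CPn 1 ↦ √(2 / (n + 1)) * fsDist x y)
    (fun x y ↦ mul_nonneg (sqrt_nonneg _) (fsDist_nonneg x y))
    (fun x y ↦ mul_le_mul_of_nonneg_left (fsDist_le x y) (sqrt_nonneg _))
    (by obtain ⟨x, y, hxy⟩ := exists_fsDist_eq 0; exact ⟨x, y, by rw [hxy]⟩)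
  rwa [Fintype.card_fin, h_diam] at h
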